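/- arXiv:1703.01117 — 3 statements merged into one kernel-verified Lean document; each statement's English description precedes it below -/
import Mathlib

section
/- Let a group G act without inversions on a tree T with finitely many G-orbits of vertices and finitely many G-orbits of edges, with every edge stabilizer G_e finite, and with every vertex stabilizer G_v infinite. If H and K are subgroups of finite index in G, then C̄_T(H ∩ K) ≤ 2N · C̄_T(H) · C̄_T(K), where N := sup{|G_x ∩ HK| : x an edge of T}. -/
open MulAction Pointwise

namespace Paper

variable {G V : Type*} [Group G] [MulAction G V]

/-- An element is hyperbolic if it fixes no vertex of the tree `T`. -/
def IsHyperbolic (_T : SimpleGraph V) (g : G) : Prop := ∀ v : V, g • v ≠ v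

/-- The number of orbits of the action of the group `H` on the subset `S`. -/
noncomputable def orbCount (H : Type*) [Group H] {α : Type*} [MulAction H α]
    (S : Set α) : ℕ :=
  Nat.card (Quotient (Setoid.comap (Subtype.val : S → α) (MulAction.orbitRel H α)))

/-- The action of the group `H` on the subset `S` has finitely many orbits. -/
def QuotFinite (H : Type*) [Group H] {α : Type*} [MulAction H α] (S : Set α) : Prop :=
  Finite (Quotient (Setoid.comap (Subtype.val : S → α) (MulAction.orbitRel H α)))

/-- Ordered edges of the induced subgraph of `T` on `S`. -/
def orderedEdges (T : SimpleGraph V) (S : Set V) : Set (V × V) :=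
  {p : V × V | p.1 ∈ S ∧ p.2 ∈ S ∧ T.Adj p.1 p.2}

/-- `S` is the vertex set of a nonempty `H`-invariant subtree of `T`. -/
def InvSubtree (T : SimpleGraph V) (H : Subgroup G) (S : Set V) : Prop :=
  (∀ h ∈ H, ∀ v ∈ S, h • v ∈ S) ∧ (T.induce S).Connected

/-- The (vertex set of the) minimal `H`-invariant subtree `T_H` of `T`: the
intersection of all nonempty `H`-invariant subtrees.  (When `H` contains a
hyperbolic element this is the unique minimal nonempty `H`-invariant subtree.) -/
def minSubtree (T : SimpleGraph V) (H : Subgroup G) : Set V :=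
  ⋂₀ {S : Set V | InvSubtree T H S}

/-- `v` is `H`-degenerate with respect to the subtree with vertex set `S`:
`H_v = H_e` for some edge `e` of `S` incident to `v`. -/
def DegenIn (T : SimpleGraph V) (H : Subgroup G) (S : Set V) (v : V) : Prop :=
  ∃ w ∈ S, T.Adj v w ∧ H ⊓ MulAction.stabilizer G v ≤ MulAction.stabilizer G w

/-- The `H`-nondegenerate vertices of the subtree with vertex set `S`. -/
def ndegSet (T : SimpleGraph V) (H : Subgroup G) (S : Set V) : Set V :=
  {v ∈ S | ¬ DegenIn T H S v}

/-- The star of `[v]_H` in the quotient graph `S/H`, as the set of ordered edges of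
`S` with initial vertex in the `H`-orbit of `v` (an edge of the quotient in the star
of `[v]_H` is an `H`-orbit of such pairs). -/
def starSet (T : SimpleGraph V) (H : Subgroup G) (S : Set V) (v : V) : Set (V × V) :=
  {p : V × V | p.1 ∈ S ∧ p.2 ∈ S ∧ T.Adj p.1 p.2 ∧ p.1 ∈ MulAction.orbit H v}

/-- The degree of the vertex `[v]_H` in the quotient graph `S/H`: the number of
`H`-orbits of ordered pairs `(u, w)` of adjacent vertices of `S` with `u ∈ H • v`. -/
noncomputable def quotDegree (T : SimpleGraph V) (H : Subgroup G) (S : Set V) (v : V) : ℕ :=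
  orbCount H (starSet T H S v)

/-- The rank of the quotient graph `T_H/H`, i.e. #edges − #vertices + 1
(each unordered edge corresponds to two `H`-orbits of ordered edges). -/
noncomputable def quotRank (T : SimpleGraph V) (H : Subgroup G) : ℕ :=
  orbCount H (orderedEdges T (minSubtree T H)) / 2 + 1 - orbCount H (minSubtree T H)

open Classical in
/-- The complexity `C_T(H)`: if `H` contains a hyperbolic element it is
`r(T_H/H) + #(H-orbits of H-nondegenerate vertices of T_H)`, and `1` otherwise. -/
noncomputable def complexity (T : SimpleGraph V) (H : Subgroup G) : ℕ :=
  if ∃ h ∈ H, IsHyperbolic T h then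
    quotRank T H + orbCount H (ndegSet T H (minSubtree T H))
  else 1

/-- The reduced complexity `C̄_T(H) = max {C_T(H) − 1, 0}`. -/
noncomputable def rComplexity (T : SimpleGraph V) (H : Subgroup G) : ℕ :=
  complexity T H - 1

/-- `H` is tame: either `H` fixes a vertex, or `H` contains a hyperbolic element
and the quotient graph `T_H/H` is finite. -/
def Tame (T : SimpleGraph V) (H : Subgroup G) : Prop :=
  (∃ v : V, ∀ h ∈ H, h • v = v) ∨
    ((∃ h ∈ H, IsHyperbolic T h) ∧ QuotFinite H (minSubtree T H) ∧
      QuotFinite H (orderedEdges T (minSubtree T H)))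

end Paper

/-!
Because vertex stabilizers are infinite and edge stabilizers finite, a subgroup `J` of finite
index has no `J`-degenerate vertices, so for `J` containing a hyperbolic element
`C_T(J) = r(T_J/J) + #V(T_J/J) ≥ #E(T_J/J) + 1`, with equality when the quotient graph is
connected, as it is for `J = H ∩ K`. Hence `C̄_T(H ∩ K) = #E(T_{H∩K}/(H ∩ K))` and
`C̄_T(J) ≥ #E(T_J/J)` for `J = H, K`.

Map each `(H ∩ K)`-orbit of ordered edges of `T_{H∩K} ⊆ T_H ∩ T_K` to the pair of its `H`- and
`K`-orbits. If `x` and `x₀` lie in the same fibre, `x = η • x₀ = κ • x₀` with `η ∈ H`, `κ ∈ K`,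
and `η⁻¹ κ ∈ G_{x₀} ∩ HK` determines the `(H ∩ K)`-orbit of `x`; so fibres have at most `N`
elements. Without inversions ordered edges come in pairs of distinct orbits, which turns the
bound on ordered edges into the bound with the factor `2`.
-/

theorem Nat.card_le_mul_card_of_card_fiber_le {α β : Type*} [Finite β] (f : α → β) {n : ℕ}
    (h : ∀ b, Nat.card {a // f a = b} ≤ n) : Nat.card α ≤ n * Nat.card β := by
  rcases finite_or_infinite α with hα | hα
  · classical
    have := Fintype.ofFinite α
    have := Fintype.ofFinite β
    simp only [Nat.card_eq_fintype_card, Fintype.card_subtype] at h ⊢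
    exact Finset.card_le_mul_card_image_of_maps_to (fun a _ => Finset.mem_univ (f a)) n
      fun b _ => h b
  · simp

theorem Function.Involutive.even_card {α : Type*} [Finite α] {f : α → α}
    (hf : Function.Involutive f) (hfix : ∀ a, f a ≠ a) : Even (Nat.card α) := by
  classical
  have := Fintype.ofFinite α
  have hsq : hf.toPerm ^ 2 = 1 := Equiv.ext fun a => hf a
  have hsupp : hf.toPerm.support = Finset.univ :=
    Finset.eq_univ_of_forall fun a => Equiv.Perm.mem_support.mpr (hfix a)
  rw [Nat.card_eq_fintype_card, ← Finset.card_univ, ← hsupp, even_iff_two_dvd]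
  exact Equiv.Perm.two_dvd_card_support hsq

theorem Subgroup.infinite_inf_of_finiteIndex {G : Type*} [Group G] (H : Subgroup G)
    [H.FiniteIndex] (B : Subgroup G) [Infinite B] : Infinite ↥(H ⊓ B) := by
  rw [← not_finite_iff_infinite]
  intro hfin
  have : Finite (H.subgroupOf B) :=
    Finite.of_injective (fun x => (⟨x.1, x.2, x.1.2⟩ : ↥(H ⊓ B)))
      fun x y hxy => Subtype.ext <| Subtype.ext <| congrArg (fun z : ↥(H ⊓ B) => (z : G)) hxy
  have : Finite B :=
    (Subgroup.finite_iff_finite_and_finiteIndex (H.subgroupOf B)).mpr ⟨this, inferInstance⟩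
  exact not_finite B

namespace SimpleGraph

variable {α β : Type*}

def imageGraph (G : SimpleGraph α) (π : α → β) : SimpleGraph β where
  Adj a b := a ≠ b ∧ ∃ x y, G.Adj x y ∧ π x = a ∧ π y = b
  symm := ⟨fun _ _ ⟨hne, x, y, h, hx, hy⟩ => ⟨hne.symm, y, x, h.symm, hy, hx⟩⟩
  loopless := ⟨fun _ h => h.1 rfl⟩

theorem Preconnected.imageGraph {G : SimpleGraph α} (hG : G.Preconnected) {π : α → β}
    (hπ : Function.Surjective π) : (G.imageGraph π).Preconnected := by
  have hwalk : ∀ {x y : α}, G.Walk x y → (G.imageGraph π).Reachable (π x) (π y) := by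
    intro x y p
    induction p with
    | nil => rfl
    | @cons x y _ hxy _ ih =>
      by_cases he : π x = π y
      · exact he ▸ ih
      · exact (Adj.reachable (G := G.imageGraph π) ⟨he, x, y, hxy, rfl, rfl⟩).trans ih
  intro a b
  obtain ⟨x, rfl⟩ := hπ a
  obtain ⟨y, rfl⟩ := hπ b
  exact hwalk (hG x y).some

theorem IsAcyclic.preconnected_induce_sInter {T : SimpleGraph α} (hT : T.IsAcyclic)
    (hconn : T.Preconnected) {F : Set (Set α)} (hF : ∀ S ∈ F, (T.induce S).Preconnected) :
    (T.induce (⋂₀ F)).Preconnected := by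
  classical
  rintro ⟨x, hx⟩ ⟨y, hy⟩
  obtain ⟨p⟩ := hconn x y
  have hp : ∀ z ∈ p.bypass.support, z ∈ ⋂₀ F := by
    intro z hz S hS
    obtain ⟨w⟩ := hF S hS ⟨x, hx S hS⟩ ⟨y, hy S hS⟩
    let q : T.Walk x y := w.map (Embedding.induce S).toHom
    -- in a tree the path between two vertices is unique, so it runs inside every subtree
    have hpq : p.bypass = q.bypass :=
      congrArg Subtype.val ((hT.subsingleton_path x y).elim ⟨_, p.bypass_isPath⟩
        ⟨_, q.bypass_isPath⟩)
    rw [hpq] at hz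
    have hzq : z ∈ (w.support.map _) :=
      Walk.support_map _ w ▸ q.support_bypass_subset_support hz
    obtain ⟨z', -, rfl⟩ := List.mem_map.mp hzq
    exact z'.2
  exact (p.bypass.induce _ hp).reachable

end SimpleGraph

namespace Paper

section Orbits

variable {G α : Type*} [Group G] [MulAction G α]

abbrev OrbitQuot (J : Type*) [Group J] [MulAction J α] (S : Set α) : Type _ :=
  Quotient (Setoid.comap (Subtype.val : S → α) (orbitRel J α))

def OrbitQuot.map {J J' : Subgroup G} (hJ : J ≤ J') {S S' : Set α} (hS : S ⊆ S') :
    OrbitQuot J S → OrbitQuot J' S' :=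
  Quotient.map' (Set.inclusion hS) fun _ _ ⟨j, hj⟩ => ⟨⟨j, hJ j.2⟩, hj⟩

theorem OrbitQuot.map_injective {J : Subgroup G} {S S' : Set α} (hS : S ⊆ S') :
    Function.Injective (OrbitQuot.map (le_refl J) hS) := by
  rintro ⟨x⟩ ⟨y⟩ h
  have h' : (⟦Set.inclusion hS x⟧ : OrbitQuot J S') = ⟦Set.inclusion hS y⟧ := h
  obtain ⟨j, hj⟩ := Quotient.exact h'
  exact Quotient.sound ⟨j, hj⟩

theorem QuotFinite.mono {J : Subgroup G} {S S' : Set α} (h : QuotFinite J S') (hS : S ⊆ S') :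
    QuotFinite J S :=
  have : Finite (OrbitQuot J S') := h
  Finite.of_injective _ (OrbitQuot.map_injective hS)

theorem orbCount_mono {J : Subgroup G} {S S' : Set α} (h : QuotFinite J S') (hS : S ⊆ S') :
    orbCount J S ≤ orbCount J S' :=
  have : Finite (OrbitQuot J S') := h
  Nat.card_le_card_of_injective _ (OrbitQuot.map_injective hS)

theorem QuotFinite.of_finiteIndex {A : Set α} (h : QuotFinite G A)
    (hA : ∀ g : G, ∀ a ∈ A, g • a ∈ A) (J : Subgroup G) [J.FiniteIndex] : QuotFinite J A := by
  have : Finite (OrbitQuot G A) := h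
  -- if `a = g • r` with `r` the chosen representative of its `G`-orbit and `g⁻¹ = c * j` with
  -- `c` the chosen representative of `g⁻¹ J`, then `a` lies in the `J`-orbit of `c⁻¹ • r`
  refine Finite.of_surjective (fun p : (G ⧸ J) × OrbitQuot G A =>
    (⟦⟨p.1.out⁻¹ • p.2.out.1, hA _ _ p.2.out.2⟩⟧ : OrbitQuot J A)) ?_
  rintro ⟨a⟩
  obtain ⟨g, hg⟩ : ∃ g : G, g • (⟦a⟧ : OrbitQuot G A).out.1 = a :=
    Quotient.exact (Quotient.out_eq (⟦a⟧ : OrbitQuot G A)).symm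
  obtain ⟨j, hj⟩ := QuotientGroup.mk_out_eq_mul J g⁻¹
  refine ⟨(((g⁻¹ : G) : G ⧸ J), ⟦a⟧), Quotient.sound ⟨j⁻¹, ?_⟩⟩
  show (j⁻¹ : G) • (a : α) = (QuotientGroup.mk g⁻¹ : G ⧸ J).out⁻¹ • _
  rw [hj, mul_inv_rev, inv_inv, mul_smul, hg]

theorem inter_stabilizer_prod (A : Set G) (p : α × α) :
    A ∩ stabilizer G p = {g | g ∈ A ∧ g • p.1 = p.1 ∧ g • p.2 = p.2} := by
  ext
  simp only [Set.mem_inter_iff, SetLike.mem_coe, mem_stabilizer_iff, Prod.ext_iff,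
    Prod.smul_fst, Prod.smul_snd]
  exact Iff.rfl

section Inf

variable (H K : Subgroup G) (S : Set α)

def orbitQuotInfToProd (q : OrbitQuot (H ⊓ K : Subgroup G) S) : OrbitQuot H S × OrbitQuot K S :=
  (OrbitQuot.map inf_le_left subset_rfl q, OrbitQuot.map inf_le_right subset_rfl q)

theorem card_fiber_orbitQuotInfToProd_le (x₀ : S)
    [Finite ↥((H : Set G) * K ∩ stabilizer G (x₀ : α))] :
    Nat.card {q // orbitQuotInfToProd H K S q = orbitQuotInfToProd H K S ⟦x₀⟧} ≤
      Nat.card ↥((H : Set G) * K ∩ stabilizer G (x₀ : α)) := by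
  have hrep : ∀ q : {q // orbitQuotInfToProd H K S q = orbitQuotInfToProd H K S ⟦x₀⟧},
      (∃ η : H, (η : G) • (x₀ : α) = q.1.out) ∧ ∃ κ : K, (κ : G) • (x₀ : α) = q.1.out := by
    rintro ⟨q, hq⟩
    rw [← Quotient.out_eq q] at hq
    obtain ⟨hH, hK⟩ := Prod.ext_iff.mp hq
    exact ⟨Quotient.exact hH, Quotient.exact hK⟩
  choose η hη using fun q => (hrep q).1
  choose κ hκ using fun q => (hrep q).2
  let f (q) : ↥((H : Set G) * K ∩ stabilizer G (x₀ : α)) :=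
    ⟨(η q : G)⁻¹ * κ q, Set.mul_mem_mul (inv_mem (η q).2) (κ q).2,
      by rw [SetLike.mem_coe, mem_stabilizer_iff, mul_smul, hκ, ← hη, inv_smul_smul]⟩
  refine Nat.card_le_card_of_injective f fun q q' hqq' => ?_
  have hl : (η q : G) * (η q' : G)⁻¹ = κ q * (κ q' : G)⁻¹ := by
    have h : (η q : G)⁻¹ * κ q = (η q' : G)⁻¹ * κ q' := congrArg Subtype.val hqq'
    rw [inv_mul_eq_iff_eq_mul.mp h]
    group
  apply Subtype.ext
  rw [← Quotient.out_eq q.1, ← Quotient.out_eq q'.1]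
  refine Quotient.sound ⟨⟨(η q : G) * (η q' : G)⁻¹, Subgroup.mem_inf.mpr
    ⟨mul_mem (η q).2 (inv_mem (η q').2), hl ▸ mul_mem (κ q).2 (inv_mem (κ q').2)⟩⟩, ?_⟩
  show ((η q : G) * (η q' : G)⁻¹) • (q'.1.out : α) = q.1.out
  rw [← hη q', ← hη q, mul_smul, inv_smul_smul]

theorem orbCount_inf_le {N : ℕ} (hH : QuotFinite H S) (hK : QuotFinite K S)
    (hfin : ∀ x ∈ S, ((H : Set G) * K ∩ stabilizer G x).Finite)
    (hN : ∀ x ∈ S, Nat.card ↥((H : Set G) * K ∩ stabilizer G x) ≤ N) :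
    orbCount (H ⊓ K : Subgroup G) S ≤ N * (orbCount H S * orbCount K S) := by
  have : Finite (OrbitQuot H S) := hH
  have : Finite (OrbitQuot K S) := hK
  rw [orbCount, orbCount, orbCount, ← Nat.card_prod]
  refine Nat.card_le_mul_card_of_card_fiber_le (orbitQuotInfToProd H K S) fun b => ?_
  rcases isEmpty_or_nonempty {q // orbitQuotInfToProd H K S q = b} with hb | ⟨q₀, rfl⟩
  · simp
  · rw [← Quotient.out_eq q₀]
    have := (hfin _ q₀.out.2).to_subtype
    exact (card_fiber_orbitQuotInfToProd_le H K S q₀.out).trans (hN _ q₀.out.2)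

end Inf

end Orbits

section Tree

variable {G V : Type*} [Group G] [MulAction G V] {T : SimpleGraph V}

theorem orderedEdges_mono {S S' : Set V} (h : S ⊆ S') : orderedEdges T S ⊆ orderedEdges T S' :=
  fun _ hp => ⟨h hp.1, h hp.2.1, hp.2.2⟩

theorem minSubtree_mono {L J : Subgroup G} (h : L ≤ J) : minSubtree T L ⊆ minSubtree T J :=
  Set.sInter_subset_sInter fun _ hS => ⟨fun l hl => hS.1 l (h hl), hS.2⟩

theorem preconnected_induce_minSubtree (hconn : T.Preconnected) (hacyc : T.IsAcyclic)
    (J : Subgroup G) : (T.induce (minSubtree T J)).Preconnected :=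
  hacyc.preconnected_induce_sInter hconn fun _ hS => hS.2.preconnected

theorem even_orbCount_orderedEdges
    (hninv : ∀ (g : G) (u w : V), T.Adj u w → ¬(g • u = w ∧ g • w = u))
    (J : Subgroup G) (S : Set V) (hE : QuotFinite J (orderedEdges T S)) :
    Even (orbCount J (orderedEdges T S)) := by
  have : Finite (OrbitQuot J (orderedEdges T S)) := hE
  let reverse : OrbitQuot J (orderedEdges T S) → OrbitQuot J (orderedEdges T S) :=
    Quotient.map' (fun p => ⟨p.1.swap, p.2.2.1, p.2.1, p.2.2.2.symm⟩)
      fun _ _ ⟨j, hj⟩ => ⟨j, congrArg Prod.swap hj⟩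
  refine Function.Involutive.even_card (f := reverse) ?_ ?_
  · rintro ⟨p⟩
    rfl
  · rintro ⟨p⟩ h
    obtain ⟨j, hj⟩ := Quotient.exact h
    exact hninv j p.1.1 p.1.2 p.2.2.2 ⟨congrArg Prod.fst hj, congrArg Prod.snd hj⟩

theorem card_dart_imageGraph_le_orbCount (J : Subgroup G) (S : Set V)
    (hE : QuotFinite J (orderedEdges T S)) :
    Nat.card ((T.induce S).imageGraph (Quotient.mk _ : S → OrbitQuot J S)).Dart ≤
      orbCount J (orderedEdges T S) := by
  have : Finite (OrbitQuot J (orderedEdges T S)) := hE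
  choose x y hxy hx hy using
    fun d : ((T.induce S).imageGraph (Quotient.mk _ : S → OrbitQuot J S)).Dart => d.adj.2
  refine Nat.card_le_card_of_injective
    (fun d => ⟦⟨((x d : V), (y d : V)), (x d).2, (y d).2, hxy d⟩⟧) fun d d' h => ?_
  obtain ⟨j, hj⟩ := Quotient.exact h
  refine SimpleGraph.Dart.ext _ _ (Prod.ext ?_ ?_)
  · rw [← hx d, ← hx d']
    exact Quotient.sound ⟨j, congrArg Prod.fst hj⟩
  · rw [← hy d, ← hy d']
    exact Quotient.sound ⟨j, congrArg Prod.snd hj⟩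

theorem orbCount_le_half_orbCount_orderedEdges_add_one (J : Subgroup G) {S : Set V}
    (hS : (T.induce S).Preconnected) (hE : QuotFinite J (orderedEdges T S)) :
    orbCount J S ≤ orbCount J (orderedEdges T S) / 2 + 1 := by
  rcases finite_or_infinite (OrbitQuot J S) with hV | hV
  swap
  · simp [orbCount]
  rcases isEmpty_or_nonempty (OrbitQuot J S) with h0 | h0
  · simp [orbCount]
  classical
  have := Fintype.ofFinite (OrbitQuot J S)
  -- the quotient graph `S/J` with its loops and multiple edges removed
  set Q := (T.induce S).imageGraph (Quotient.mk _ : S → OrbitQuot J S)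
  have hQ : Q.Connected := ⟨hS.imageGraph Quotient.mk_surjective⟩
  have hdart : Nat.card Q.Dart = 2 * Nat.card Q.edgeSet := by
    rw [Nat.card_eq_fintype_card, Q.dart_card_eq_twice_card_edges, SimpleGraph.edgeFinset_card,
      Nat.card_eq_fintype_card]
  have hvert := hQ.card_vert_le_card_edgeSet_add_one
  have hedge : Nat.card Q.Dart ≤ _ := card_dart_imageGraph_le_orbCount J S hE
  rw [orbCount]
  omega

theorem ndegSet_eq_self
    (hstabfin : ∀ u w : V, T.Adj u w →
      Finite (MulAction.stabilizer G u ⊓ MulAction.stabilizer G w : Subgroup G))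
    (hstabinf : ∀ v : V, Infinite (MulAction.stabilizer G v))
    (J : Subgroup G) [J.FiniteIndex] (S : Set V) : ndegSet T J S = S := by
  -- `J_v` has finite index in the infinite group `G_v`, so it cannot fix the edge `{v, w}`
  refine Set.sep_eq_self_iff_mem_true.mpr fun v _ ⟨w, _, hvw, hle⟩ => ?_
  have := hstabinf v
  have := hstabfin v w hvw
  have hle' : J ⊓ stabilizer G v ≤ stabilizer G v ⊓ stabilizer G w := le_inf inf_le_right hle
  have : Finite ↥(J ⊓ stabilizer G v) :=
    Finite.of_injective _ (Subgroup.inclusion_injective hle')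
  have := Subgroup.infinite_inf_of_finiteIndex J (stabilizer G v)
  exact not_finite ↥(J ⊓ stabilizer G v)

theorem complexity_eq_quotRank_add_orbCount
    (hstabfin : ∀ u w : V, T.Adj u w →
      Finite (MulAction.stabilizer G u ⊓ MulAction.stabilizer G w : Subgroup G))
    (hstabinf : ∀ v : V, Infinite (MulAction.stabilizer G v))
    {J : Subgroup G} [J.FiniteIndex] (hJ : ∃ g ∈ J, IsHyperbolic T g) :
    complexity T J = quotRank T J + orbCount J (minSubtree T J) := by
  rw [complexity, if_pos hJ, ndegSet_eq_self hstabfin hstabinf]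

theorem half_orbCount_orderedEdges_le_rComplexity
    (hstabfin : ∀ u w : V, T.Adj u w →
      Finite (MulAction.stabilizer G u ⊓ MulAction.stabilizer G w : Subgroup G))
    (hstabinf : ∀ v : V, Infinite (MulAction.stabilizer G v))
    {J : Subgroup G} [J.FiniteIndex] (hJ : ∃ g ∈ J, IsHyperbolic T g) :
    orbCount J (orderedEdges T (minSubtree T J)) / 2 ≤ rComplexity T J := by
  rw [rComplexity, complexity_eq_quotRank_add_orbCount hstabfin hstabinf hJ, quotRank]
  omega

theorem rComplexity_eq_half_orbCount_orderedEdges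
    (hstabfin : ∀ u w : V, T.Adj u w →
      Finite (MulAction.stabilizer G u ⊓ MulAction.stabilizer G w : Subgroup G))
    (hstabinf : ∀ v : V, Infinite (MulAction.stabilizer G v))
    {J : Subgroup G} [J.FiniteIndex] (hJ : ∃ g ∈ J, IsHyperbolic T g)
    (hV : orbCount J (minSubtree T J) ≤ orbCount J (orderedEdges T (minSubtree T J)) / 2 + 1) :
    rComplexity T J = orbCount J (orderedEdges T (minSubtree T J)) / 2 := by
  rw [rComplexity, complexity_eq_quotRank_add_orbCount hstabfin hstabinf hJ, quotRank]
  omega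

theorem quotFinite_orderedEdges_of_finiteIndex
    (hadj : ∀ (g : G) (u w : V), T.Adj u w → T.Adj (g • u) (g • w))
    (hEorb : QuotFinite G {p : V × V | T.Adj p.1 p.2}) (J : Subgroup G) [J.FiniteIndex]
    (S : Set V) : QuotFinite J (orderedEdges T S) :=
  (hEorb.of_finiteIndex (fun g p hp => hadj g p.1 p.2 hp) J).mono fun _ hp => hp.2.2

theorem orbCount_orderedEdges_inf_le
    (hstabfin : ∀ u w : V, T.Adj u w →
      Finite (MulAction.stabilizer G u ⊓ MulAction.stabilizer G w : Subgroup G))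
    {H K : Subgroup G} {N : ℕ}
    (hN : ∀ u w : V, T.Adj u w →
      Nat.card {g : G | g ∈ (H : Set G) * (K : Set G) ∧ g • u = u ∧ g • w = w} ≤ N)
    {S SH SK : Set V} (hSH : S ⊆ SH) (hSK : S ⊆ SK)
    (hH : QuotFinite H (orderedEdges T SH)) (hK : QuotFinite K (orderedEdges T SK)) :
    orbCount (H ⊓ K : Subgroup G) (orderedEdges T S) ≤
      N * (orbCount H (orderedEdges T SH) * orbCount K (orderedEdges T SK)) := by
  calc orbCount (H ⊓ K : Subgroup G) (orderedEdges T S)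
      ≤ N * (orbCount H (orderedEdges T S) * orbCount K (orderedEdges T S)) := by
        refine orbCount_inf_le H K _ (hH.mono (orderedEdges_mono hSH))
          (hK.mono (orderedEdges_mono hSK)) (fun p hp => ?_) fun p hp => ?_
        · have := hstabfin p.1 p.2 hp.2.2
          rw [inter_stabilizer_prod]
          exact (Set.toFinite (stabilizer G p.1 ⊓ stabilizer G p.2 : Subgroup G)).subset
            fun g hg => Subgroup.mem_inf.mpr hg.2
        · exact inter_stabilizer_prod ((H : Set G) * (K : Set G)) p ▸ hN p.1 p.2 hp.2.2
    _ ≤ N * (orbCount H (orderedEdges T SH) * orbCount K (orderedEdges T SK)) := by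
        gcongr
        exacts [orbCount_mono hH (orderedEdges_mono hSH), orbCount_mono hK (orderedEdges_mono hSK)]

end Tree

end Paper

open Paper

theorem rComplexity_inter_le_of_finite_index_general
    {V G : Type*} [Group G] [MulAction G V]
    (T : SimpleGraph V) (hconn : T.Connected) (hacyc : T.IsAcyclic)
    (hadj : ∀ (g : G) (u w : V), T.Adj u w → T.Adj (g • u) (g • w))
    (hninv : ∀ (g : G) (u w : V), T.Adj u w → ¬(g • u = w ∧ g • w = u))
    (hEorb : Paper.QuotFinite G {p : V × V | T.Adj p.1 p.2})
    (hstabfin : ∀ u w : V, T.Adj u w →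
      Finite (MulAction.stabilizer G u ⊓ MulAction.stabilizer G w : Subgroup G))
    (hstabinf : ∀ v : V, Infinite (MulAction.stabilizer G v))
    (H K : Subgroup G) (hHfi : H.FiniteIndex) (hKfi : K.FiniteIndex)
    (N : ℕ)
    -- `N` bounds `|G_x ∩ HK|` over all edges `x` of `T`
    (hN : ∀ u w : V, T.Adj u w →
      Nat.card {g : G | g ∈ (H : Set G) * (K : Set G) ∧ g • u = u ∧ g • w = w} ≤ N) :
    Paper.rComplexity T (H ⊓ K) ≤
      2 * N * Paper.rComplexity T H * Paper.rComplexity T K := by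
  by_cases hhyp : ∃ g ∈ H ⊓ K, IsHyperbolic T g
  swap
  · rw [rComplexity, complexity, if_neg hhyp]
    exact Nat.zero_le _
  obtain ⟨g, hgHK, hg⟩ := hhyp
  let E (J : Subgroup G) : ℕ := orbCount J (orderedEdges T (minSubtree T J))
  have hfinE (J : Subgroup G) [J.FiniteIndex] (S : Set V) : QuotFinite J (orderedEdges T S) :=
    quotFinite_orderedEdges_of_finiteIndex hadj hEorb J S
  have hL : rComplexity T (H ⊓ K) = E (H ⊓ K) / 2 :=
    rComplexity_eq_half_orbCount_orderedEdges hstabfin hstabinf ⟨g, hgHK, hg⟩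
      (orbCount_le_half_orbCount_orderedEdges_add_one _
        (preconnected_induce_minSubtree hconn.preconnected hacyc _) (hfinE _ _))
  have hH : E H / 2 ≤ rComplexity T H :=
    half_orbCount_orderedEdges_le_rComplexity hstabfin hstabinf ⟨g, hgHK.1, hg⟩
  have hK : E K / 2 ≤ rComplexity T K :=
    half_orbCount_orderedEdges_le_rComplexity hstabfin hstabinf ⟨g, hgHK.2, hg⟩
  have hcount : E (H ⊓ K) ≤ N * (E H * E K) :=
    orbCount_orderedEdges_inf_le hstabfin hN (minSubtree_mono inf_le_left)
      (minSubtree_mono inf_le_right) (hfinE H _) (hfinE K _)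
  obtain ⟨a, ha⟩ : Even (E H) := even_orbCount_orderedEdges hninv H _ (hfinE H _)
  obtain ⟨b, hb⟩ : Even (E K) := even_orbCount_orderedEdges hninv K _ (hfinE K _)
  rw [ha, hb] at hcount
  rw [hL]
  calc E (H ⊓ K) / 2 ≤ N * ((a + a) * (b + b)) / 2 := Nat.div_le_div_right hcount
    _ = 2 * N * a * b := by
      rw [show N * ((a + a) * (b + b)) = 2 * N * a * b * 2 by ring, Nat.mul_div_cancel _ two_pos]
    _ ≤ 2 * N * rComplexity T H * rComplexity T K := by gcongr <;> omega

/-- **Corollary.** If every vertex stabilizer is infinite and `H`, `K` have finite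
index in `G`, then `C̄_T(H ∩ K) ≤ 2N · C̄_T(H) · C̄_T(K)`. -/
theorem rComplexity_inter_le_of_finite_index
    {V G : Type*} [Group G] [MulAction G V]
    (T : SimpleGraph V) (hconn : T.Connected) (hacyc : T.IsAcyclic)
    (hadj : ∀ (g : G) (u w : V), T.Adj u w → T.Adj (g • u) (g • w))
    (hninv : ∀ (g : G) (u w : V), T.Adj u w → ¬(g • u = w ∧ g • w = u))
    (hVorb : Finite (Quotient (MulAction.orbitRel G V)))
    (hEorb : Paper.QuotFinite G {p : V × V | T.Adj p.1 p.2})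
    (hstabfin : ∀ u w : V, T.Adj u w →
      Finite (MulAction.stabilizer G u ⊓ MulAction.stabilizer G w : Subgroup G))
    (hstabinf : ∀ v : V, Infinite (MulAction.stabilizer G v))
    (H K : Subgroup G) (hHfi : H.FiniteIndex) (hKfi : K.FiniteIndex)
    (N : ℕ)
    -- `N` bounds `|G_x ∩ HK|` over all edges `x` of `T`
    (hN : ∀ u w : V, T.Adj u w →
      Nat.card {g : G | g ∈ (H : Set G) * (K : Set G) ∧ g • u = u ∧ g • w = w} ≤ N) :
    Paper.rComplexity T (H ⊓ K) ≤
      2 * N * Paper.rComplexity T H * Paper.rComplexity T K :=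
  rComplexity_inter_le_of_finite_index_general T hconn hacyc hadj hninv hEorb hstabfin hstabinf H K
    hHfi hKfi N hN
end

section
/- Let a group G act without inversions on a tree T, let A ≤ B be subgroups of G both containing hyperbolic elements (so the minimal subtrees satisfy T_A ⊆ T_B), and let v be a vertex of T_A. Let Star([v]_A) denote the set of A-orbits of ordered pairs (u,w) of adjacent vertices of T_A with u ∈ A·v, and Star([v]_B) the set of B-orbits of ordered pairs of adjacent vertices of T_B with first coordinate in B·v, and let π_B : Star([v]_A) → Star([v]_B) be the natural map sending the A-orbit of a pair to its B-orbit. Then every fiber of π_B has at most |G_v ∩ B| elements; in particular, if the relevant cardinalities are finite, |Star([v]_A)| ≤ |G_v ∩ B| · |Star([v]_B)|. -/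
open MulAction Pointwise

section Aux
variable {V : Type*} {G : Type*} [Group G] [MulAction G V]

lemma minSubtree_mono (T : SimpleGraph V) {A B : Subgroup G} (hAB : A ≤ B) :
    Paper.minSubtree T A ⊆ Paper.minSubtree T B := by
  intro x hx S hS
  exact hx S ⟨fun h hh => hS.1 h (hAB hh), hS.2⟩

/-- the key injection for the fiber bound -/
lemma fiber_embedding (T : SimpleGraph V)
    (A B : Subgroup G) (hAB : A ≤ B) (v : V) (p : V × V) :
    Nonempty ({q : Quotient (Setoid.comap
          (Subtype.val : (Paper.starSet T A (Paper.minSubtree T A) v) → V × V)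
          (MulAction.orbitRel A (V × V))) |
        (↑q.out : V × V) ∈ MulAction.orbit B p} ↪
      (MulAction.stabilizer G v ⊓ B : Subgroup G)) := by
  classical
  set SA := Paper.starSet T A (Paper.minSubtree T A) v with hSA
  set QA := Quotient (Setoid.comap (Subtype.val : SA → V × V) (MulAction.orbitRel A (V × V)))
  set F : Set QA := {q : QA | (↑q.out : V × V) ∈ MulAction.orbit B p} with hF
  by_cases hne : Nonempty F
  · have hchoice : ∀ q : F, ∃ c : G, c ∈ B ∧ c • p.1 = v ∧
        (c • p) ∈ MulAction.orbit A (↑(q : QA).out : V × V) := by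
      rintro ⟨q, hq⟩
      show ∃ c : G, c ∈ B ∧ c • p.1 = v ∧ (c • p) ∈ MulAction.orbit A (↑q.out : V × V)
      obtain ⟨b, hb⟩ := hq
      have hb' : (↑b : G) • p = (↑q.out : V × V) := hb
      have hout : (↑q.out : V × V) ∈ SA := q.out.2
      obtain ⟨a, ha⟩ := hout.2.2.2
      have ha' : (↑a : G) • v = (↑q.out : V × V).1 := ha
      refine ⟨(↑a : G)⁻¹ * (↑b : G), B.mul_mem (B.inv_mem (hAB a.2)) b.2, ?_, ?_⟩
      · have h1 : ((↑a : G)⁻¹ * (↑b : G)) • p.1 = (↑a : G)⁻¹ • ((↑b : G) • p).1 := by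
          rw [mul_smul]; rfl
        rw [h1, hb', ← ha', inv_smul_smul]
      · rw [mul_smul, hb']
        exact ⟨a⁻¹, rfl⟩
    choose c hcB hc1 hcorb using hchoice
    obtain ⟨q0⟩ := hne
    have hinj : Function.Injective (fun q : F =>
        (⟨c q * (c q0)⁻¹, Subgroup.mem_inf.mpr ⟨by
          have h0 : c q0 • p.1 = v := hc1 q0
          have h1 : c q • p.1 = v := hc1 q
          show (c q * (c q0)⁻¹) • v = v
          have h2 : (c q * (c q0)⁻¹) • v = c q • p.1 := by
            conv_lhs => rw [← h0]
            rw [mul_smul, inv_smul_smul]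
          rw [h2, h1],
          B.mul_mem (hcB q) (B.inv_mem (hcB q0))⟩⟩ :
          (MulAction.stabilizer G v ⊓ B : Subgroup G))) := by
      intro q q' hqq
      have hc : c q = c q' := by
        have := congrArg (fun x => (x : G) * (c q0)) (Subtype.ext_iff.mp hqq)
        simpa [mul_assoc] using this
      have horb : (↑(q : QA).out : V × V) ∈ MulAction.orbit A (↑(q' : QA).out : V × V) := by
        obtain ⟨a, ha⟩ := hcorb q
        obtain ⟨a', ha'⟩ := hcorb q'
        have ha1 : (↑a : G) • (↑(q : QA).out : V × V) = c q • p := ha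
        have ha2 : (↑a' : G) • (↑(q' : QA).out : V × V) = c q' • p := ha'
        refine ⟨⟨(↑a : G)⁻¹ * (↑a' : G), A.mul_mem (A.inv_mem a.2) a'.2⟩, ?_⟩
        show ((↑a : G)⁻¹ * (↑a' : G)) • (↑(q' : QA).out : V × V) = ↑(q : QA).out
        rw [mul_smul, ha2, ← hc, ← ha1, inv_smul_smul]
      have : (q : QA) = (q' : QA) := by
        rw [← Quotient.out_eq (q : QA), ← Quotient.out_eq (q' : QA)]
        exact Quotient.sound horb
      exact Subtype.ext this
    exact ⟨⟨_, hinj⟩⟩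
  · rw [not_nonempty_iff] at hne
    exact ⟨Function.Embedding.ofIsEmpty⟩

end Aux


universe uV uG

/-- **Lemma 2(1).** For subgroups `A ≤ B` containing hyperbolic elements and a vertex
`v` of `T_A`, every fiber of the natural map `π_B : Star([v]_A) → Star([v]_B)` has at
most `|G_v ∩ B|` elements; in particular
`|Star([v]_A)| ≤ |G_v ∩ B| · |Star([v]_B)|`. -/
theorem star_fiber_card_le
    {V : Type uV} {G : Type uG} [Group G] [MulAction G V]
    (T : SimpleGraph V) (hconn : T.Connected) (hacyc : T.IsAcyclic)
    (hadj : ∀ (g : G) (u w : V), T.Adj u w → T.Adj (g • u) (g • w))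
    (hninv : ∀ (g : G) (u w : V), T.Adj u w → ¬(g • u = w ∧ g • w = u))
    (A B : Subgroup G) (hAB : A ≤ B)
    (hAhyp : ∃ a ∈ A, Paper.IsHyperbolic T a)
    (hBhyp : ∃ b ∈ B, Paper.IsHyperbolic T b)
    (v : V) (hv : v ∈ Paper.minSubtree T A) :
    (∀ p ∈ Paper.starSet T B (Paper.minSubtree T B) v,
      Cardinal.lift.{uG} (Cardinal.mk {q : Quotient (Setoid.comap
          (Subtype.val : (Paper.starSet T A (Paper.minSubtree T A) v) → V × V)
          (MulAction.orbitRel A (V × V))) |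
        (↑q.out : V × V) ∈ MulAction.orbit B p}) ≤
      Cardinal.lift.{uV} (Cardinal.mk (MulAction.stabilizer G v ⊓ B : Subgroup G))) ∧
    Cardinal.lift.{uG} (Cardinal.mk (Quotient (Setoid.comap
        (Subtype.val : (Paper.starSet T A (Paper.minSubtree T A) v) → V × V)
        (MulAction.orbitRel A (V × V))))) ≤
      Cardinal.lift.{uV} (Cardinal.mk (MulAction.stabilizer G v ⊓ B : Subgroup G)) *
        Cardinal.lift.{uG} (Cardinal.mk (Quotient (Setoid.comap
          (Subtype.val : (Paper.starSet T B (Paper.minSubtree T B) v) → V × V)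
          (MulAction.orbitRel B (V × V))))) := by
  classical
  have part1 : ∀ p : V × V,
      Cardinal.lift.{uG} (Cardinal.mk {q : Quotient (Setoid.comap
          (Subtype.val : (Paper.starSet T A (Paper.minSubtree T A) v) → V × V)
          (MulAction.orbitRel A (V × V))) |
        (↑q.out : V × V) ∈ MulAction.orbit B p}) ≤
      Cardinal.lift.{uV} (Cardinal.mk (MulAction.stabilizer G v ⊓ B : Subgroup G)) :=
    fun p => Cardinal.lift_mk_le'.mpr (fiber_embedding T A B hAB v p)
  refine ⟨fun p _ => part1 p, ?_⟩
  have hincl : Paper.starSet T A (Paper.minSubtree T A) v ⊆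
      Paper.starSet T B (Paper.minSubtree T B) v := by
    rintro p ⟨h1, h2, h3, h4⟩
    refine ⟨minSubtree_mono T hAB h1, minSubtree_mono T hAB h2, h3, ?_⟩
    obtain ⟨a, ha⟩ := h4
    exact ⟨⟨(a : G), hAB a.2⟩, ha⟩
  set SA := Paper.starSet T A (Paper.minSubtree T A) v
  set SB := Paper.starSet T B (Paper.minSubtree T B) v
  set sB : Setoid SB := Setoid.comap (Subtype.val : SB → V × V) (MulAction.orbitRel B (V × V))
    with hsB
  set QA := Quotient (Setoid.comap (Subtype.val : SA → V × V) (MulAction.orbitRel A (V × V)))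
    with hQA
  set QB := Quotient sB with hQB
  have hresp : ∀ s t : SA, (Setoid.comap (Subtype.val : SA → V × V)
      (MulAction.orbitRel A (V × V))).r s t →
      (Quotient.mk sB ⟨s.1, hincl s.2⟩ : QB) = Quotient.mk sB ⟨t.1, hincl t.2⟩ := by
    intro s t hst
    apply Quotient.sound
    obtain ⟨a, ha⟩ := hst
    exact ⟨⟨(a : G), hAB a.2⟩, ha⟩
  set Φ : QA → QB := Quotient.lift (fun s : SA => (Quotient.mk sB ⟨s.1, hincl s.2⟩ : QB)) hresp
    with hΦ
  have hfiber : ∀ y : QB, ∃ p : V × V, ∀ q : QA,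
      Φ q = y ↔ (↑q.out : V × V) ∈ MulAction.orbit B p := by
    intro y
    refine ⟨↑y.out, fun q => ?_⟩
    have hq : Φ q = Quotient.mk sB ⟨(↑q.out : V × V), hincl q.out.2⟩ := by
      conv_lhs => rw [← Quotient.out_eq q]
      rfl
    constructor
    · intro hy
      have h2 : Quotient.mk sB ⟨(↑q.out : V × V), hincl q.out.2⟩ = Quotient.mk sB y.out := by
        rw [← hq, hy, Quotient.out_eq]
      exact Quotient.exact h2
    · intro horb
      have h2 : Quotient.mk sB ⟨(↑q.out : V × V), hincl q.out.2⟩ = Quotient.mk sB y.out :=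
        Quotient.sound horb
      rw [hq, h2, Quotient.out_eq]
  have hsig := Cardinal.mk_congr (Equiv.sigmaFiberEquiv Φ).symm
  rw [Cardinal.mk_sigma] at hsig
  calc Cardinal.lift.{uG} (Cardinal.mk QA)
      = Cardinal.lift.{uG} (Cardinal.sum fun y : QB => Cardinal.mk {x : QA // Φ x = y}) := by
        rw [← hsig]
    _ = Cardinal.sum fun y : QB =>
          Cardinal.lift.{uG} (Cardinal.mk {x : QA // Φ x = y}) := by
        rw [Cardinal.lift_sum]
    _ ≤ Cardinal.sum fun _ : QB =>
          Cardinal.lift.{uV} (Cardinal.mk (MulAction.stabilizer G v ⊓ B : Subgroup G)) := by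
        apply Cardinal.sum_le_sum
        intro y
        obtain ⟨p, hp⟩ := hfiber y
        have he : Cardinal.mk {x : QA // Φ x = y} =
            Cardinal.mk {q : QA | (↑q.out : V × V) ∈ MulAction.orbit B p} :=
          Cardinal.mk_congr (Equiv.subtypeEquivRight hp)
        rw [he]
        exact part1 p
    _ ≤ Cardinal.lift.{uV} (Cardinal.mk (MulAction.stabilizer G v ⊓ B : Subgroup G)) *
          Cardinal.lift.{uG} (Cardinal.mk QB) := by
        rw [Cardinal.sum_const]
        simp only [Cardinal.lift_lift]
        rw [mul_comm, Cardinal.lift_umax.{uV, uG}]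
end

section
/- Let a group G act without inversions on a tree T, let A ≤ B be subgroups of G both containing hyperbolic elements (so T_A ⊆ T_B), and let v be a vertex of T_A. Suppose that B_v fixes every edge of T_B incident to v, i.e. every element of B fixing v fixes every T_B-neighbor of v (in particular v is B-degenerate). Then the natural map π_B : Star([v]_A) → Star([v]_B), sending the A-orbit of an ordered pair (u,w) of adjacent vertices of T_A with u ∈ A·v to its B-orbit, is injective. -/
open MulAction Pointwise

/-- **Lemma 2(2).** For subgroups `A ≤ B` containing hyperbolic elements and a vertex
`v` of `T_A`, if `B_v` fixes every edge of `T_B` incident to `v`, then the natural map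
`π_B : Star([v]_A) → Star([v]_B)` is injective: two ordered edges of `T_A` in the star
of `[v]_A` lying in the same `B`-orbit already lie in the same `A`-orbit. -/
theorem star_map_injective
    {V G : Type*} [Group G] [MulAction G V]
    (T : SimpleGraph V) (hconn : T.Connected) (hacyc : T.IsAcyclic)
    (hadj : ∀ (g : G) (u w : V), T.Adj u w → T.Adj (g • u) (g • w))
    (hninv : ∀ (g : G) (u w : V), T.Adj u w → ¬(g • u = w ∧ g • w = u))
    (A B : Subgroup G) (hAB : A ≤ B)
    (hAhyp : ∃ a ∈ A, Paper.IsHyperbolic T a)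
    (hBhyp : ∃ b ∈ B, Paper.IsHyperbolic T b)
    (v : V) (hv : v ∈ Paper.minSubtree T A)
    -- `B_v` fixes every `T_B`-neighbor of `v`
    (hfix : ∀ b ∈ B ⊓ MulAction.stabilizer G v,
      ∀ w ∈ Paper.minSubtree T B, T.Adj v w → b • w = w) :
    ∀ p ∈ Paper.starSet T A (Paper.minSubtree T A) v,
      ∀ p' ∈ Paper.starSet T A (Paper.minSubtree T A) v,
        p ∈ MulAction.orbit B p' → p ∈ MulAction.orbit A p' := by
  rintro ⟨u, w⟩ ⟨hu, hw, huw, a, ha⟩ ⟨u', w'⟩ ⟨hu', hw', huw', a', ha'⟩ ⟨b, hb⟩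
  -- T_A ⊆ T_B
  have hsub : Paper.minSubtree T A ⊆ Paper.minSubtree T B := fun x hx S hS =>
    hx S ⟨fun h hh => hS.1 h (hAB hh), hS.2⟩
  have hinv : ∀ g ∈ B, ∀ x ∈ Paper.minSubtree T B, g • x ∈ Paper.minSubtree T B :=
    fun g hg x hx S hS => hS.1 g hg x (hx S hS)
  obtain ⟨hb1, hb2⟩ : (b : G) • u' = u ∧ (b : G) • w' = w := Prod.mk.injEq .. ▸ hb
  have ha : (a : G) • v = u := ha
  have ha' : (a' : G) • v = u' := ha'
  set c : G := (a : G)⁻¹ * (b : G) * (a' : G) with hc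
  have hcB : c ∈ B := B.mul_mem (B.mul_mem (B.inv_mem (hAB a.2)) b.2) (hAB a'.2)
  have hcv : c • v = v := by
    rw [hc, mul_smul, mul_smul, ha', hb1, ← ha, inv_smul_smul]
  have hadjv : T.Adj v ((a' : G)⁻¹ • w') := by
    have := hadj (a' : G)⁻¹ u' w' huw'
    rwa [← ha', inv_smul_smul] at this
  have hmem : (a' : G)⁻¹ • w' ∈ Paper.minSubtree T B :=
    hinv _ (B.inv_mem (hAB a'.2)) _ (hsub hw')
  have key : c • ((a' : G)⁻¹ • w') = (a' : G)⁻¹ • w' :=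
    hfix c ⟨hcB, hcv⟩ _ hmem hadjv
  have hw'' : (b : G) • w' = ((a : G) * (a' : G)⁻¹) • w' := by
    rw [hc, mul_smul, mul_smul, smul_inv_smul] at key
    rw [mul_smul, ← key, smul_inv_smul]
  refine ⟨⟨(a : G) * (a' : G)⁻¹, A.mul_mem a.2 (A.inv_mem a'.2)⟩, ?_⟩
  have : ((a : G) * (a' : G)⁻¹) • (u', w') = (u, w) := by
    have h1 : ((a : G) * (a' : G)⁻¹) • u' = u := by
      rw [mul_smul, ← ha', inv_smul_smul, ha]
    have h2 : ((a : G) * (a' : G)⁻¹) • w' = w := by rw [← hw'', hb2]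
    exact Prod.ext h1 h2
  exact this
end
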